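/- Volume comparability of twisted rectangles: with e₁,…,e_m unit vectors in ℝⁿ (any n linearly independent), and for r ∈ (ℝ₊)^m with r_{l₁},…,r_{l_n} the n largest entries, the Lebesgue measure of the twisted rectangle satisfies |R(x,r)| ≍ r_{l₁} ⋯ r_{l_n} · |det(e_{l₁},…,e_{l_n})|, with implicit constants depending only on e₁,…,e_m. -/

import Mathlib

/-! For an injective `l`, the parallelepiped `R(e ∘ l, x, s)` is the translate of the image of a
box under the linear map whose matrix has columns `e (l j)`, so its volume is
`2ⁿ ∏ s j · |det|`. It lies inside `R(e, x, r)` for `s = r ∘ l` (extend the coefficients by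
zero). Conversely, expand every `e μ` with `μ ∉ range l` in the basis `e ∘ l`; the coefficients
are bounded by one `K` for all of the finitely many `l`, and `r μ ≤ r (l j)`, so `R(e, x, r)` lies
in the parallelepiped with `s j = (m K + 1) r (l j)`. -/

open MeasureTheory

/-- The twisted rectangle `R(x,r) = {x + Σ λ_j e_j : |λ_j| < r_j}`. -/
def twistedRect {n m : ℕ} (e : Fin m → EuclideanSpace ℝ (Fin n))
    (x : EuclideanSpace ℝ (Fin n)) (r : Fin m → ℝ) : Set (EuclideanSpace ℝ (Fin n)) :=
  {y | ∃ lam : Fin m → ℝ, (∀ j, |lam j| < r j) ∧ y = x + ∑ j, lam j • e j}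

open Function Finset

theorem EuclideanSpace.volume_setOf_abs_lt {ι : Type*} [Fintype ι] (r : ι → ℝ) :
    volume {v : EuclideanSpace ℝ ι | ∀ j, |v j| < r j} = ∏ j, ENNReal.ofReal (2 * r j) := by
  have hbox : {v : EuclideanSpace ℝ ι | ∀ j, |v j| < r j} =
      (MeasurableEquiv.toLp 2 (ι → ℝ)).symm ⁻¹' Set.univ.pi fun j => Set.Ioo (-r j) (r j) := by
    ext v
    simp [abs_lt]
  rw [hbox, (EuclideanSpace.volume_preserving_symm_measurableEquiv_toLp ι).measure_preimage
    (MeasurableSet.univ_pi fun _ => measurableSet_Ioo).nullMeasurableSet, volume_pi_pi]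
  simp only [Real.volume_Ioo, sub_neg_eq_add, two_mul]

theorem Matrix.toLpLin_of_columns_apply {n : ℕ} (b : Fin n → EuclideanSpace ℝ (Fin n))
    (v : EuclideanSpace ℝ (Fin n)) :
    Matrix.toLpLin 2 2 (Matrix.of fun i j => b j i) v = ∑ j, v j • b j := by
  ext i
  simp [Matrix.toLpLin_apply, Matrix.mulVec, dotProduct, mul_comm]

theorem twistedRect_eq_image {n : ℕ} (b : Fin n → EuclideanSpace ℝ (Fin n))
    (x : EuclideanSpace ℝ (Fin n)) (r : Fin n → ℝ) :
    twistedRect b x r = (x + ·) '' (Matrix.toLpLin 2 2 (Matrix.of fun i j => b j i) ''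
      {v | ∀ j, |v j| < r j}) := by
  ext y
  simp only [twistedRect, Set.mem_ofPred_eq, Set.image_image, Set.mem_image,
    Matrix.toLpLin_of_columns_apply]
  constructor
  · rintro ⟨lam, hlam, rfl⟩
    exact ⟨WithLp.toLp 2 lam, hlam, rfl⟩
  · rintro ⟨v, hv, rfl⟩
    exact ⟨v, hv, rfl⟩

theorem volume_twistedRect_eq_det {n : ℕ} (b : Fin n → EuclideanSpace ℝ (Fin n))
    (x : EuclideanSpace ℝ (Fin n)) {r : Fin n → ℝ} (hr : ∀ j, 0 ≤ r j) :
    volume (twistedRect b x r) =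
      ENNReal.ofReal (2 ^ n * (∏ j, r j) * |(Matrix.of fun i j => b j i).det|) := by
  rw [twistedRect_eq_image, Set.image_add_left, measure_preimage_add,
    Measure.addHaar_image_linearMap, LinearMap.det_toLpLin,
    EuclideanSpace.volume_setOf_abs_lt,
    ← ENNReal.ofReal_prod_of_nonneg fun j _ => mul_nonneg zero_le_two (hr j),
    ← ENNReal.ofReal_mul (abs_nonneg _), prod_mul_distrib, prod_const, card_univ,
    Fintype.card_fin, mul_comm]

theorem twistedRect_comp_subset {n m : ℕ} (e : Fin m → EuclideanSpace ℝ (Fin n))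
    (x : EuclideanSpace ℝ (Fin n)) {r : Fin m → ℝ} {k : ℕ} {l : Fin k → Fin m}
    (hl : Injective l) (hr : ∀ μ ∉ Set.range l, 0 < r μ) :
    twistedRect (e ∘ l) x (r ∘ l) ⊆ twistedRect e x r := by
  rintro _ ⟨v, hv, rfl⟩
  refine ⟨extend l v 0, fun μ => ?_, ?_⟩
  · by_cases hμ : μ ∈ Set.range l
    · obtain ⟨j, rfl⟩ := hμ
      simpa [hl.extend_apply] using hv j
    · simpa [extend_apply' _ _ _ hμ] using hr μ hμ
  · congr 1
    refine Fintype.sum_of_injective l hl _ _ (fun μ hμ => ?_) (fun j => ?_)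
    · rw [extend_apply' _ _ _ hμ, Pi.zero_apply, zero_smul]
    · rw [hl.extend_apply, comp_apply]

theorem Fintype.sum_eq_sum_comp_add_sum_compl_image {M ι κ : Type*} [AddCommMonoid M]
    [Fintype ι] [Fintype κ] [DecidableEq κ] {l : ι → κ} (hl : Injective l) (f : κ → M) :
    ∑ μ, f μ = ∑ j, f (l j) + ∑ μ ∈ (univ.image l)ᶜ, f μ := by
  rw [← sum_add_sum_compl (univ.image l), sum_image fun a _ b _ h => hl h]

theorem twistedRect_subset_comp_of_coeff_le {n m : ℕ} (e : Fin m → EuclideanSpace ℝ (Fin n))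
    (x : EuclideanSpace ℝ (Fin n)) {r : Fin m → ℝ} {l : Fin n → Fin m} (hl : Injective l)
    (hmax : ∀ (j : Fin n) (μ : Fin m), μ ∉ Set.range l → r μ ≤ r (l j)) {K : ℝ} (hK : 0 ≤ K)
    (hcoeff : ∀ μ ∉ Set.range l, ∃ c : Fin n → ℝ, e μ = ∑ j, c j • e (l j) ∧ ∀ j, |c j| ≤ K) :
    twistedRect e x r ⊆ twistedRect (e ∘ l) x fun j => (m * K + 1) * r (l j) := by
  classical
  rintro _ ⟨lam, hlam, rfl⟩
  set S := (univ.image l)ᶜ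
  have hS : ∀ μ ∈ S, μ ∉ Set.range l := fun μ hμ ⟨j, hj⟩ => by simp [S, ← hj] at hμ
  choose! c hc hcK using hcoeff
  refine ⟨fun j => lam (l j) + ∑ μ ∈ S, lam μ * c μ j, fun j => ?_, ?_⟩
  · have hr : 0 < r (l j) := (abs_nonneg _).trans_lt (hlam _)
    calc |lam (l j) + ∑ μ ∈ S, lam μ * c μ j|
        ≤ |lam (l j)| + ∑ μ ∈ S, |lam μ| * |c μ j| := by
          grw [abs_add_le, abs_sum_le_sum_abs]; simp only [abs_mul, le_refl]
      _ < r (l j) + ∑ μ ∈ S, r (l j) * K := by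
          refine add_lt_add_of_lt_of_le (hlam _) (sum_le_sum fun μ hμ => ?_)
          exact mul_le_mul ((hlam μ).le.trans (hmax j μ (hS μ hμ))) (hcK μ (hS μ hμ) j)
            (abs_nonneg _) hr.le
      _ ≤ (m * K + 1) * r (l j) := by
          rw [sum_const, nsmul_eq_mul]
          have hcard : (S.card : ℝ) ≤ m := by exact_mod_cast (card_le_univ S).trans_eq (by simp)
          nlinarith [mul_le_mul_of_nonneg_right hcard (mul_nonneg hr.le hK)]
  · simp only [comp_apply, add_smul, sum_add_distrib, sum_smul, mul_smul]
    rw [Fintype.sum_eq_sum_comp_add_sum_compl_image hl, sum_comm]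
    congr 2
    refine sum_congr rfl fun μ hμ => ?_
    rw [hc μ (hS μ hμ), smul_sum]

theorem exists_abs_le_of_forall_exists {α ι : Type*} [Finite α] [Finite ι]
    {P : α → (ι → ℝ) → Prop} (h : ∀ a, ∃ c, P a c) :
    ∃ K, 0 ≤ K ∧ ∀ a, ∃ c, P a c ∧ ∀ i, |c i| ≤ K := by
  choose c hc using h
  obtain ⟨K, hK⟩ := Finite.exists_le fun p : α × ι => |c p.1 p.2|
  exact ⟨max K 0, le_max_right _ _,
    fun a => ⟨c a, hc a, fun i => (hK (a, i)).trans (le_max_left _ _)⟩⟩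

theorem linearIndependent_comp_of_forall_card_eq {R V κ : Type*} [Semiring R] [AddCommMonoid V]
    [Module R V] (v : κ → V) {k : ℕ}
    (h : ∀ s : Finset κ, s.card = k → LinearIndependent R fun i : s => v i)
    {l : Fin k → κ} (hl : Injective l) : LinearIndependent R (v ∘ l) := by
  classical
  exact (h (univ.map ⟨l, hl⟩) (by simp)).comp (fun j => ⟨l j, by simp⟩)
    fun a b hab => hl (congrArg Subtype.val hab)

theorem exists_uniform_coeff_bound {n m : ℕ} (e : Fin m → EuclideanSpace ℝ (Fin n))
    (hindep : ∀ s : Finset (Fin m), s.card = n → LinearIndependent ℝ fun i : s => e i) :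
    ∃ K, 0 ≤ K ∧ ∀ l : Fin n → Fin m, Injective l →
      ∀ μ, ∃ c : Fin n → ℝ, e μ = ∑ j, c j • e (l j) ∧ ∀ j, |c j| ≤ K := by
  have hspan : ∀ p : {l : Fin n → Fin m // Injective l} × Fin m,
      ∃ c : Fin n → ℝ, e p.2 = ∑ j, c j • e (p.1.1 j) := by
    rintro ⟨⟨l, hl⟩, μ⟩
    have htop := (linearIndependent_comp_of_forall_card_eq e hindep hl
      ).span_eq_top_of_card_eq_finrank' (by simp)
    obtain ⟨c, hc⟩ :=
      (Submodule.mem_span_range_iff_exists_fun ℝ).1 (htop ▸ Submodule.mem_top (x := e μ))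
    exact ⟨c, hc.symm⟩
  obtain ⟨K, hK, hbound⟩ := exists_abs_le_of_forall_exists hspan
  exact ⟨K, hK, fun l hl μ => hbound (⟨l, hl⟩, μ)⟩

theorem twistedRect_volume_comparison_general {n m : ℕ}
    (e : Fin m → EuclideanSpace ℝ (Fin n))
    (hindep : ∀ s : Finset (Fin m), s.card = n →
      LinearIndependent ℝ (fun i : s => e i)) :
    ∃ c C : ℝ, 0 < c ∧ 0 < C ∧
      ∀ (r : Fin m → ℝ), (∀ j, 0 < r j) →
      ∀ (l : Fin n → Fin m), Function.Injective l →
        (∀ (j : Fin n) (μ : Fin m), μ ∉ Set.range l → r μ ≤ r (l j)) →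
      ∀ x : EuclideanSpace ℝ (Fin n),
        ENNReal.ofReal (c * (∏ j, r (l j)) * |(Matrix.of fun i j => e (l j) i).det|)
          ≤ volume (twistedRect e x r) ∧
        volume (twistedRect e x r)
          ≤ ENNReal.ofReal (C * (∏ j, r (l j)) * |(Matrix.of fun i j => e (l j) i).det|) := by
  obtain ⟨K, hK, hcoeff⟩ := exists_uniform_coeff_bound e hindep
  refine ⟨2 ^ n, 2 ^ n * (m * K + 1) ^ n, by positivity, by positivity,
    fun r hr l hl hmax x => ⟨?_, ?_⟩⟩
  · calc _ = volume (twistedRect (e ∘ l) x (r ∘ l)) :=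
          (volume_twistedRect_eq_det _ x fun j => (hr (l j)).le).symm
      _ ≤ _ := measure_mono (twistedRect_comp_subset e x hl fun μ _ => hr μ)
  · calc _ ≤ volume (twistedRect (fun j => e (l j)) x fun j => (m * K + 1) * r (l j)) :=
          measure_mono <|
            twistedRect_subset_comp_of_coeff_le e x hl hmax hK fun μ _ => hcoeff l hl μ
      _ = _ := by
          rw [volume_twistedRect_eq_det _ x fun j => by have := hr (l j); positivity,
            prod_mul_distrib, prod_const, card_univ, Fintype.card_fin]
          ring_nf

/-- Volume comparability of twisted rectangles:
`|R(x,r)| ≍ r_{l₁} ⋯ r_{l_n} · |det(e_{l₁},…,e_{l_n})|` when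
`r_{l₁},…,r_{l_n}` are the `n` largest entries of `r`, with constants
depending only on `e₁,…,e_m`. -/
theorem twistedRect_volume_comparison {n m : ℕ} (hnm : n ≤ m)
    (e : Fin m → EuclideanSpace ℝ (Fin n))
    (hunit : ∀ j, ‖e j‖ = 1)
    (hindep : ∀ s : Finset (Fin m), s.card = n →
      LinearIndependent ℝ (fun i : s => e i)) :
    ∃ c C : ℝ, 0 < c ∧ 0 < C ∧
      ∀ (r : Fin m → ℝ), (∀ j, 0 < r j) →
      ∀ (l : Fin n → Fin m), Function.Injective l →
        (∀ (j : Fin n) (μ : Fin m), μ ∉ Set.range l → r μ ≤ r (l j)) →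
      ∀ x : EuclideanSpace ℝ (Fin n),
        ENNReal.ofReal (c * (∏ j, r (l j)) * |(Matrix.of fun i j => e (l j) i).det|)
          ≤ volume (twistedRect e x r) ∧
        volume (twistedRect e x r)
          ≤ ENNReal.ofReal (C * (∏ j, r (l j)) * |(Matrix.of fun i j => e (l j) i).det|) :=
  twistedRect_volume_comparison_general e hindep
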